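/- Let P be symmetric positive definite, x ∈ R^p, σ > 0, γ := x^T P x, s := γ + σ^2, k := P x/s, e ∈ R, and δ := k e. Then (1/2) δ^T (P^{-1} + (P^{-1} + x x^T/σ^2)) δ = (1/2)(e^2/s)(2γ + (γ/σ)^2)/s. -/

import Mathlib

open Matrix

/-! Since `δ = (e / s) • P x`, the inverse `P⁻¹` cancels against `P`: each of the two copies of
`P⁻¹` contributes `(P x) ⬝ᵥ x = γ`, and the rank-one term `x xᵀ / σ²` contributes
`(x ⬝ᵥ P x)² / σ² = γ² / σ²`, all scaled by `(e / s)²`. -/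

section

variable {n R : Type*} [Fintype n] [CommRing R]

theorem dotProduct_vecMulVec_self_mulVec (x v : n → R) :
    v ⬝ᵥ (vecMulVec x x *ᵥ v) = (x ⬝ᵥ v) ^ 2 := by
  rw [vecMulVec_mulVec, op_smul_eq_smul, dotProduct_smul, smul_eq_mul, dotProduct_comm, sq]

variable [DecidableEq n]

theorem mulVec_dotProduct_inv_add_inv_add_smul_vecMulVec_mulVec {P : Matrix n n R}
    (hP : IsUnit P.det) (a : R) (x : n → R) :
    (P *ᵥ x) ⬝ᵥ ((P⁻¹ + (P⁻¹ + a • vecMulVec x x)) *ᵥ (P *ᵥ x))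
      = 2 * (x ⬝ᵥ P *ᵥ x) + a * (x ⬝ᵥ P *ᵥ x) ^ 2 := by
  have hinv : P⁻¹ *ᵥ (P *ᵥ x) = x := by
    rw [mulVec_mulVec, nonsing_inv_mul P hP, one_mulVec]
  rw [add_mulVec, add_mulVec, smul_mulVec, dotProduct_add, dotProduct_add, dotProduct_smul,
    hinv, dotProduct_vecMulVec_self_mulVec, dotProduct_comm (P *ᵥ x) x, smul_eq_mul]
  ring

end

theorem symmetric_kl_closed_form_general {p : ℕ} (P : Matrix (Fin p) (Fin p) ℝ)
    (hP : P.PosDef) (x : Fin p → ℝ) (σ : ℝ)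
    (γ : ℝ) (hγ : γ = x ⬝ᵥ P.mulVec x)
    (s : ℝ)
    (k : Fin p → ℝ) (hk : k = s⁻¹ • P.mulVec x) (e : ℝ)
    (δ : Fin p → ℝ) (hδ : δ = e • k) :
    (1/2) * (δ ⬝ᵥ (P⁻¹ + (P⁻¹ + (σ^2)⁻¹ • Matrix.vecMulVec x x)).mulVec δ)
      = (1/2) * (e^2 / s) * (2 * γ + (γ / σ)^2) / s := by
  have hδ' : δ = (e * s⁻¹) • P *ᵥ x := by rw [hδ, hk, smul_smul]
  rw [hδ', mulVec_smul, dotProduct_smul, smul_dotProduct,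
    mulVec_dotProduct_inv_add_inv_add_smul_vecMulVec_mulVec hP.det_pos.ne'.isUnit, ← hγ,
    smul_eq_mul, smul_eq_mul]
  ring

/-- Symmetric KL divergence between Gaussian posteriors before and after a
rank-one Kalman update (Proposition 4). -/
theorem symmetric_kl_closed_form {p : ℕ} (P : Matrix (Fin p) (Fin p) ℝ)
    (hP : P.PosDef) (hPsymm : P.IsSymm) (x : Fin p → ℝ) (σ : ℝ) (hσ : 0 < σ)
    (γ : ℝ) (hγ : γ = x ⬝ᵥ P.mulVec x)
    (s : ℝ) (hs : s = γ + σ^2)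
    (k : Fin p → ℝ) (hk : k = s⁻¹ • P.mulVec x) (e : ℝ)
    (δ : Fin p → ℝ) (hδ : δ = e • k) :
    (1/2) * (δ ⬝ᵥ (P⁻¹ + (P⁻¹ + (σ^2)⁻¹ • Matrix.vecMulVec x x)).mulVec δ)
      = (1/2) * (e^2 / s) * (2 * γ + (γ / σ)^2) / s :=
  symmetric_kl_closed_form_general P hP x σ γ hγ s k hk e δ hδ
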